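/- arXiv:1603.02429 — 2 statements merged into one kernel-verified Lean document; each statement's English description precedes it below -/
import Mathlib

section
/- Let V be a complex vector space, and let A, B : V × V → ℂ be sesquilinear forms (linear in the first argument and conjugate-linear in the second). Let λ ∈ ℂ with λ ≠ 0, and let u, u* ∈ V satisfy the eigen-equations λ·A(u, z) = B(u, z) for all z ∈ V and λ·A(z, u*) = B(z, u*) for all z ∈ V. Then for all v, v* ∈ V with B(v, v*) ≠ 0, the generalized Rayleigh quotient satisfies the identity A(v, v*)/B(v, v*) − λ⁻¹ = A(v − u, v* − u*)/B(v, v*) − λ⁻¹ · B(v − u, v* − u*)/B(v, v*). -/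
/-- Lemma 4.2 (generalized Rayleigh quotient identity): given an eigenpair `(λ, u)` of
`λ A(u, z) = B(u, z)` and a dual eigenvector `u*` of `λ A(z, u*) = B(z, u*)`, for any
`v, v*` with `B(v, v*) ≠ 0`,
`A(v,v*)/B(v,v*) − λ⁻¹ = A(v−u, v*−u*)/B(v,v*) − λ⁻¹ · B(v−u, v*−u*)/B(v,v*)`. -/
theorem rayleigh_quotient_identity
    {V : Type*} [AddCommGroup V] [Module ℂ V]
    (A B : V → V → ℂ)
    (hA_add_left : ∀ x y z : V, A (x + y) z = A x z + A y z)
    (hA_smul_left : ∀ (c : ℂ) (x z : V), A (c • x) z = c * A x z)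
    (hA_add_right : ∀ x y z : V, A x (y + z) = A x y + A x z)
    (hA_smul_right : ∀ (c : ℂ) (x y : V), A x (c • y) = (starRingEnd ℂ) c * A x y)
    (hB_add_left : ∀ x y z : V, B (x + y) z = B x z + B y z)
    (hB_smul_left : ∀ (c : ℂ) (x z : V), B (c • x) z = c * B x z)
    (hB_add_right : ∀ x y z : V, B x (y + z) = B x y + B x z)
    (hB_smul_right : ∀ (c : ℂ) (x y : V), B x (c • y) = (starRingEnd ℂ) c * B x y)
    (lam : ℂ) (hlam : lam ≠ 0) (u ustar : V)
    (hu : ∀ z : V, lam * A u z = B u z)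
    (hustar : ∀ z : V, lam * A z ustar = B z ustar) :
    ∀ v vstar : V, B v vstar ≠ 0 →
      A v vstar / B v vstar - lam⁻¹ =
        A (v - u) (vstar - ustar) / B v vstar -
          lam⁻¹ * (B (v - u) (vstar - ustar) / B v vstar) := by
  intro v vstar hB
  have hAl : ∀ x z : V, A (x - u) z = A x z - A u z := fun x z => by
    rw [sub_eq_add_neg, ← neg_one_smul ℂ u, hA_add_left, hA_smul_left]; ring
  have hBl : ∀ x z : V, B (x - u) z = B x z - B u z := fun x z => by
    rw [sub_eq_add_neg, ← neg_one_smul ℂ u, hB_add_left, hB_smul_left]; ring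
  have hAr : ∀ x z : V, A x (z - ustar) = A x z - A x ustar := fun x z => by
    rw [sub_eq_add_neg, ← neg_one_smul ℂ ustar, hA_add_right, hA_smul_right]
    simp; ring
  have hBr : ∀ x z : V, B x (z - ustar) = B x z - B x ustar := fun x z => by
    rw [sub_eq_add_neg, ← neg_one_smul ℂ ustar, hB_add_right, hB_smul_right]
    simp; ring
  have key : A (v - u) (vstar - ustar) - lam⁻¹ * B (v - u) (vstar - ustar)
      = A v vstar - lam⁻¹ * B v vstar := by
    rw [hAr, hAl, hAl, hBr, hBl, hBl,
      ← hu vstar, ← hu ustar, ← hustar v]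
    field_simp
    ring
  have h2 : A (v - u) (vstar - ustar) / B v vstar -
      lam⁻¹ * (B (v - u) (vstar - ustar) / B v vstar)
      = (A (v - u) (vstar - ustar) - lam⁻¹ * B (v - u) (vstar - ustar)) / B v vstar := by
    ring
  rw [h2, key, sub_div, mul_div_assoc, div_self hB, mul_one]
end

section
/- Let V be a complex normed vector space, and let A, B : V × V → ℂ be sesquilinear forms (linear in the first argument and conjugate-linear in the second) satisfying the continuity bounds |A(x, y)| ≤ M_A·‖x‖·‖y‖ and |B(x, y)| ≤ M_B·‖x‖·‖y‖ for all x, y ∈ V, where M_A, M_B ≥ 0. Let λ ∈ ℂ with λ ≠ 0, and let u, u* ∈ V satisfy λ·A(u, z) = B(u, z) for all z ∈ V and λ·A(z, u*) = B(z, u*) for all z ∈ V. Then for all v, v* ∈ V and β > 0 with |B(v, v*)| ≥ β, one has |A(v, v*)/B(v, v*) − λ⁻¹| ≤ β⁻¹·(M_A + |λ⁻¹|·M_B)·‖v − u‖·‖v* − u*‖. -/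
/-- Quantitative eigenvalue-error estimate (proof of Theorem 4.3): combining the
generalized Rayleigh quotient identity with continuity of the sesquilinear forms `A`, `B`
and a uniform positive lower bound `β` on `|B(v, v*)|` yields
`|A(v,v*)/B(v,v*) − λ⁻¹| ≤ β⁻¹ (M_A + |λ⁻¹| M_B) ‖v − u‖ ‖v* − u*‖`. -/
theorem rayleigh_quotient_error_estimate
    {V : Type*} [NormedAddCommGroup V] [NormedSpace ℂ V]
    (A B : V → V → ℂ)
    (hA_add_left : ∀ x y z : V, A (x + y) z = A x z + A y z)
    (hA_smul_left : ∀ (c : ℂ) (x z : V), A (c • x) z = c * A x z)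
    (hA_add_right : ∀ x y z : V, A x (y + z) = A x y + A x z)
    (hA_smul_right : ∀ (c : ℂ) (x y : V), A x (c • y) = (starRingEnd ℂ) c * A x y)
    (hB_add_left : ∀ x y z : V, B (x + y) z = B x z + B y z)
    (hB_smul_left : ∀ (c : ℂ) (x z : V), B (c • x) z = c * B x z)
    (hB_add_right : ∀ x y z : V, B x (y + z) = B x y + B x z)
    (hB_smul_right : ∀ (c : ℂ) (x y : V), B x (c • y) = (starRingEnd ℂ) c * B x y)
    (MA MB : ℝ) (hMA : 0 ≤ MA) (hMB : 0 ≤ MB)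
    (hAbound : ∀ x y : V, ‖A x y‖ ≤ MA * ‖x‖ * ‖y‖)
    (hBbound : ∀ x y : V, ‖B x y‖ ≤ MB * ‖x‖ * ‖y‖)
    (lam : ℂ) (hlam : lam ≠ 0) (u ustar : V)
    (hu : ∀ z : V, lam * A u z = B u z)
    (hustar : ∀ z : V, lam * A z ustar = B z ustar) :
    ∀ (v vstar : V) (β : ℝ), 0 < β → β ≤ ‖B v vstar‖ →
      ‖A v vstar / B v vstar - lam⁻¹‖ ≤
        β⁻¹ * (MA + ‖lam⁻¹‖ * MB) * ‖v - u‖ * ‖vstar - ustar‖ := by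
  intro v vstar β hβ hβle
  have hBne : B v vstar ≠ 0 := by
    intro h
    rw [h] at hβle
    simp at hβle
    linarith
  have h1 : ∀ z, lam⁻¹ * B u z = A u z := fun z => by
    rw [← hu z]; field_simp
  have h2 : ∀ z, lam⁻¹ * B z ustar = A z ustar := fun z => by
    rw [← hustar z]; field_simp
  set e := v - u with he
  set es := vstar - ustar with hes
  have hv : v = u + e := by simp [he]
  have hvs : vstar = ustar + es := by simp [hes]
  have key : A v vstar - lam⁻¹ * B v vstar = A e es - lam⁻¹ * B e es := by
    rw [hv, hvs, hA_add_left, hA_add_right, hA_add_right,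
      hB_add_left, hB_add_right, hB_add_right]
    linear_combination -h1 ustar - h1 es - h2 e
  have hquot : A v vstar / B v vstar - lam⁻¹
      = (A e es - lam⁻¹ * B e es) / B v vstar := by
    rw [← key, sub_div, mul_div_assoc, div_self hBne, mul_one]
  rw [hquot, norm_div]
  have hnum : ‖A e es - lam⁻¹ * B e es‖
      ≤ (MA + ‖lam⁻¹‖ * MB) * ‖e‖ * ‖es‖ := by
    calc ‖A e es - lam⁻¹ * B e es‖
        ≤ ‖A e es‖ + ‖lam⁻¹ * B e es‖ := by
          simpa [sub_eq_add_neg] using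
            (norm_sub_le (A e es) (lam⁻¹ * B e es))
      _ ≤ MA * ‖e‖ * ‖es‖ + ‖lam⁻¹‖ * (MB * ‖e‖ * ‖es‖) := by
          rw [norm_mul]
          exact add_le_add (hAbound e es)
            (mul_le_mul_of_nonneg_left (hBbound e es) (by positivity))
      _ = (MA + ‖lam⁻¹‖ * MB) * ‖e‖ * ‖es‖ := by ring
  have hden : (0:ℝ) < ‖B v vstar‖ := lt_of_lt_of_le hβ hβle
  calc ‖A e es - lam⁻¹ * B e es‖ / ‖B v vstar‖
      ≤ ((MA + ‖lam⁻¹‖ * MB) * ‖e‖ * ‖es‖) / β :=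
        div_le_div₀ (by positivity) hnum hβ hβle
    _ = β⁻¹ * (MA + ‖lam⁻¹‖ * MB) * ‖e‖ * ‖es‖ := by ring
end
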